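/- Let λ₁(t) := (√(t²+4)+t)/2, L(t) := (log λ₁(t)/√(t²+4))·[[−t, 2],[2, t]] (the matrix logarithm of the right stretch tensor of simple shear F(t) = [[1,t],[0,1]]), and P := [[−2, 0],[0, 2]] (so that exp(P) = diag(e^{−2}, e²) ∈ SL(2) is a plastic stretch). Then the function g(t) := exp(‖L(t) − P‖²) = exp(2·(log λ₁(t))² − 8t·log λ₁(t)/√(t²+4) + 8) is not convex on ℝ. Hence the additive logarithmic energy F ↦ exp(‖dev₂ log U − dev₂ log U_p‖²) is not rank-one convex at the plastic stretch U_p = diag(e^{−2}, e²), even though F ↦ exp(‖dev₂ log U‖²) is rank-one convex. -/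

import Mathlib

/-!
Since `λ₁(t) λ₁(−t) = 1`, the energy `g` is even, so convexity would force `g 0 ≤ g 1`.
But `log λ₁(0) = 0` gives `g 0 = e⁸`, while at `t = 1` the exponent is
`8 + 2 l (l − 4/√5)` with `0 < l = log λ₁(1) ≤ λ₁(1) − 1 < 4/√5`, so `g 1 < g 0`.
-/

open Matrix

/-- The larger eigenvalue `λ₁(t) = (√(t²+4)+t)/2` of the right stretch tensor of simple shear. -/
noncomputable def lam1 (t : ℝ) : ℝ := (Real.sqrt (t ^ 2 + 4) + t) / 2

/-- The principal matrix logarithm `L(t) = (log λ₁(t)/√(t²+4)) • [[−t, 2], [2, t]]`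
of the right stretch tensor of the simple shear `F(t) = [[1, t], [0, 1]]`. -/
noncomputable def Lsh (t : ℝ) : Matrix (Fin 2) (Fin 2) ℝ :=
  (Real.log (lam1 t) / Real.sqrt (t ^ 2 + 4)) • !![-t, 2; 2, t]

/-- The trace-free plastic logarithmic strain `P = [[−2, 0], [0, 2]]`,
so that `exp P = diag(e⁻², e²) ∈ SL(2)`. -/
def Pplast : Matrix (Fin 2) (Fin 2) ℝ := !![-2, 0; 0, 2]

/-- The additive logarithmic exponentiated Hencky energy along the simple shear line:
`g(t) = exp ‖L(t) − P‖²`, with `‖X‖² = tr (X * Xᵀ)` the squared Frobenius norm. -/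
noncomputable def gEnergy (t : ℝ) : ℝ :=
  Real.exp (Matrix.trace ((Lsh t - Pplast) * (Lsh t - Pplast)ᵀ))

open Real

theorem ConvexOn.apply_zero_le_of_even {E : Type*} [AddCommGroup E] [Module ℝ E] {f : E → ℝ}
    (hf : ConvexOn ℝ Set.univ f) (heven : ∀ x, f (-x) = f x) (x : E) : f 0 ≤ f x := by
  have := hf.2 (Set.mem_univ (-x)) (Set.mem_univ x) (by norm_num : (0 : ℝ) ≤ 1 / 2)
    (by norm_num : (0 : ℝ) ≤ 1 / 2) (by norm_num)
  rw [heven, smul_neg, neg_add_cancel, smul_eq_mul] at this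
  linarith

lemma trace_Lsh_sub_Pplast_mul_transpose (t : ℝ) :
    trace ((Lsh t - Pplast) * (Lsh t - Pplast)ᵀ) =
      2 * log (lam1 t) ^ 2 - 8 * t * log (lam1 t) / √(t ^ 2 + 4) + 8 := by
  have hpos : (0 : ℝ) < t ^ 2 + 4 := by positivity
  have hs2 : √(t ^ 2 + 4) ^ 2 = t ^ 2 + 4 := sq_sqrt hpos.le
  simp only [Lsh, Pplast, trace_fin_two, mul_apply, Fin.sum_univ_two, Matrix.sub_apply,
    Matrix.smul_apply, transpose_apply, of_apply, cons_val', cons_val_zero, cons_val_one,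
    empty_val', cons_val_fin_one, smul_eq_mul]
  field_simp
  linear_combination -2 * log (lam1 t) ^ 2 * hs2

lemma gEnergy_eq (t : ℝ) :
    gEnergy t = exp (2 * log (lam1 t) ^ 2 - 8 * t * log (lam1 t) / √(t ^ 2 + 4) + 8) := by
  rw [gEnergy, trace_Lsh_sub_Pplast_mul_transpose]

lemma lam1_mul_lam1_neg (t : ℝ) : lam1 t * lam1 (-t) = 1 := by
  have hs2 : √(t ^ 2 + 4) ^ 2 = t ^ 2 + 4 := sq_sqrt (by positivity)
  simp only [lam1, neg_sq]
  linear_combination hs2 / 4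

lemma log_lam1_neg (t : ℝ) : log (lam1 (-t)) = -log (lam1 t) := by
  rw [← log_inv, eq_inv_of_mul_eq_one_right (lam1_mul_lam1_neg t)]

lemma gEnergy_neg (t : ℝ) : gEnergy (-t) = gEnergy t := by
  rw [gEnergy_eq, gEnergy_eq, log_lam1_neg, neg_sq]
  ring_nf

lemma lam1_zero : lam1 0 = 1 := by
  rw [lam1, show (0 : ℝ) ^ 2 + 4 = 2 ^ 2 by norm_num, sqrt_sq zero_le_two]
  norm_num

lemma one_lt_lam1 {t : ℝ} (ht : 0 < t) : 1 < lam1 t := by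
  have : 2 ≤ √(t ^ 2 + 4) := le_sqrt_of_sq_le (by nlinarith)
  rw [lam1]
  linarith

lemma gEnergy_one_lt_gEnergy_zero : gEnergy 1 < gEnergy 0 := by
  rw [gEnergy_eq, gEnergy_eq, lam1_zero, log_one, exp_lt_exp]
  have hlam : lam1 1 = (√5 + 1) / 2 := by norm_num [lam1]
  have hl : 0 < log (lam1 1) := log_pos (one_lt_lam1 one_pos)
  have hl_le : log (lam1 1) ≤ (√5 - 1) / 2 := by
    linarith [log_le_sub_one_of_pos (zero_lt_one.trans (one_lt_lam1 one_pos))]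
  have h5 : √5 ^ 2 = 5 := sq_sqrt (by norm_num)
  have h5pos : 0 < √5 := by positivity
  have : 2 * log (lam1 1) ^ 2 < 8 * 1 * log (lam1 1) / √(1 ^ 2 + 4) := by
    rw [show (1 : ℝ) ^ 2 + 4 = 5 by norm_num, lt_div_iff₀ h5pos]
    nlinarith
  linarith

theorem stmt18 :
    (∀ t : ℝ, gEnergy t =
        Real.exp (2 * (Real.log (lam1 t)) ^ 2 -
          8 * t * Real.log (lam1 t) / Real.sqrt (t ^ 2 + 4) + 8)) ∧
      ¬ ConvexOn ℝ Set.univ gEnergy :=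
  ⟨gEnergy_eq, fun hconv =>
    (hconv.apply_zero_le_of_even gEnergy_neg 1).not_gt gEnergy_one_lt_gEnergy_zero⟩
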